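/- arXiv:1805.09234 — 2 statements merged into one kernel-verified Lean document; each statement's English description precedes it below -/
import Mathlib

section
/- Let S be an m×n real matrix with nonnegative entries, no zero row (for every i there is j with S_{i,j} ≠ 0) and no zero column (for every j there is i with S_{i,j} ≠ 0). Then the following are equivalent: (1) S is indecomposable; (2) the m×m matrix S·Sᵗ is irreducible; (3) the n×n matrix Sᵗ·S is irreducible. -/
open Matrix BigOperators

/-- An `m×n` real matrix `S` is decomposable if there are a set `I` of row indices and a set `J`
of column indices, with `(I,J) ≠ (∅,∅)` and `(I,J) ≠ (univ,univ)`, such that `S i j = 0`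
whenever `i ∈ I, j ∉ J` and whenever `i ∉ I, j ∈ J`. -/
def Matrix.Decomposable {m n : ℕ} (S : Matrix (Fin m) (Fin n) ℝ) : Prop :=
  ∃ (I : Set (Fin m)) (J : Set (Fin n)),
    ¬(I = ∅ ∧ J = ∅) ∧ ¬(I = Set.univ ∧ J = Set.univ) ∧
    (∀ i ∈ I, ∀ j ∉ J, S i j = 0) ∧ (∀ i ∉ I, ∀ j ∈ J, S i j = 0)

/-- `S` is indecomposable if it is not decomposable. -/
def Matrix.Indecomposable {m n : ℕ} (S : Matrix (Fin m) (Fin n) ℝ) : Prop :=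
  ¬ S.Decomposable

/-- A square real matrix `M` is irreducible if for every set `I` of indices with `I ≠ ∅` and
`I ≠ univ` there are `i ∈ I` and `j ∉ I` with `M i j ≠ 0`. -/
def Matrix.Irreducible {p : ℕ} (M : Matrix (Fin p) (Fin p) ℝ) : Prop :=
  ∀ I : Set (Fin p), I ≠ ∅ → I ≠ Set.univ → ∃ i ∈ I, ∃ j ∉ I, M i j ≠ 0

lemma mulT_eq_zero_iff {m n : ℕ} (S : Matrix (Fin m) (Fin n) ℝ)
    (hpos : ∀ i j, 0 ≤ S i j) (i i' : Fin m) :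
    (S * Sᵀ) i i' = 0 ↔ ∀ j, S i j * S i' j = 0 := by
  have : (S * Sᵀ) i i' = ∑ j, S i j * S i' j := by
    simp [Matrix.mul_apply, Matrix.transpose_apply]
  rw [this,
    Finset.sum_eq_zero_iff_of_nonneg (fun j _ => mul_nonneg (hpos i j) (hpos i' j))]
  simp

lemma key_lemma {m n : ℕ} (S : Matrix (Fin m) (Fin n) ℝ)
    (hpos : ∀ i j, 0 ≤ S i j) (hcol : ∀ j, ∃ i, S i j ≠ 0) :
    S.Indecomposable ↔ (S * Sᵀ).Irreducible := by
  constructor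
  · intro hind I hne hnuniv
    by_contra h
    push_neg at h
    apply hind
    refine ⟨I, {j | ∃ i ∈ I, S i j ≠ 0}, ?_, ?_, ?_, ?_⟩
    · rintro ⟨hI, -⟩; exact hne hI
    · rintro ⟨hI, -⟩; exact hnuniv hI
    · intro i hi j hj
      by_contra hS
      exact hj ⟨i, hi, hS⟩
    · intro i hi j hj
      obtain ⟨i', hi', hS'⟩ := hj
      have h0 := (mulT_eq_zero_iff S hpos i' i).mp (h i' hi' i hi) j
      rcases mul_eq_zero.mp h0 with h1 | h1
      · exact absurd h1 hS'
      · exact h1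
  · intro hirr hdec
    obtain ⟨I, J, h1, h2, h3, h4⟩ := hdec
    have hIne : I ≠ ∅ := by
      intro hI
      have hJ : J ≠ ∅ := fun hJ => h1 ⟨hI, hJ⟩
      obtain ⟨j, hj⟩ := Set.nonempty_iff_ne_empty.mpr hJ
      obtain ⟨i, hi⟩ := hcol j
      exact hi (h4 i (by simp [hI]) j hj)
    have hIuniv : I ≠ Set.univ := by
      intro hI
      have hJ : J ≠ Set.univ := fun hJ => h2 ⟨hI, hJ⟩
      obtain ⟨j, hj⟩ := (Set.ne_univ_iff_exists_notMem J).mp hJ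
      obtain ⟨i, hi⟩ := hcol j
      exact hi (h3 i (by simp [hI]) j hj)
    obtain ⟨i, hi, i', hi', hne⟩ := hirr I hIne hIuniv
    rw [Ne, mulT_eq_zero_iff S hpos] at hne
    push_neg at hne
    obtain ⟨j, hj⟩ := hne
    have hj1 : S i j ≠ 0 := fun h => hj (by rw [h, zero_mul])
    have hj2 : S i' j ≠ 0 := fun h => hj (by rw [h, mul_zero])
    have hjJ : j ∈ J := by
      by_contra hjJ
      exact hj1 (h3 i hi j hjJ)
    exact hj2 (h4 i' hi' j hjJ)

lemma decomp_transpose {m n : ℕ} (S : Matrix (Fin m) (Fin n) ℝ) :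
    Sᵀ.Decomposable ↔ S.Decomposable := by
  constructor
  · rintro ⟨J, I, h1, h2, h3, h4⟩
    exact ⟨I, J, fun ⟨a, b⟩ => h1 ⟨b, a⟩, fun ⟨a, b⟩ => h2 ⟨b, a⟩,
      fun i hi j hj => h4 j hj i hi, fun i hi j hj => h3 j hj i hi⟩
  · rintro ⟨I, J, h1, h2, h3, h4⟩
    exact ⟨J, I, fun ⟨a, b⟩ => h1 ⟨b, a⟩, fun ⟨a, b⟩ => h2 ⟨b, a⟩,
      fun j hj i hi => h4 i hi j hj, fun j hj i hi => h3 i hi j hj⟩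

/-- For a nonnegative matrix `S` with no zero row and no zero column, indecomposability of `S`
is equivalent to irreducibility of `S·Sᵗ`, and to irreducibility of `Sᵗ·S`. -/
theorem indecomposable_iff_irreducible {m n : ℕ} (S : Matrix (Fin m) (Fin n) ℝ)
    (hpos : ∀ i j, 0 ≤ S i j)
    (hrow : ∀ i, ∃ j, S i j ≠ 0) (hcol : ∀ j, ∃ i, S i j ≠ 0) :
    (S.Indecomposable ↔ (S * Sᵀ).Irreducible) ∧
    (S.Indecomposable ↔ (Sᵀ * S).Irreducible) := by
  refine ⟨key_lemma S hpos hcol, ?_⟩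
  have h := key_lemma Sᵀ (fun i j => hpos j i)
    (fun i => by simpa [Matrix.transpose_apply] using hrow i)
  rw [Matrix.transpose_transpose] at h
  rw [show S.Indecomposable ↔ Sᵀ.Indecomposable from
    not_congr (decomp_transpose S).symm]
  exact h
end

section
/- Let D₁ be a real p×n matrix and D₂ a real n×q matrix, and suppose there exists a nonzero vector v ∈ ℝ^n such that (D₁ᵗ·D₁)·v = ‖D₁‖²·v and (D₂·D₂ᵗ)·v = ‖D₂‖²·v (a common Perron–Frobenius eigenvector). Then ‖D₁·D₂‖ = ‖D₁‖·‖D₂‖. (This is the sufficient condition for multiplicativity of the minimal index: if the left Perron–Frobenius eigenvector of the upper inclusion coincides with the right Perron–Frobenius eigenvector of the lower inclusion, then the scalar dimension, hence the minimal index, is multiplicative.) -/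
/-!
Put `w = D₂ᵀ v`. An eigenvector equation `Dᵀ D x = c² x` says `‖D x‖ = c ‖x‖`, so
`‖D₁ v‖ = ‖D₁‖ ‖v‖` and `‖w‖ = ‖D₂‖ ‖v‖`. Since `D₁ D₂ w = ‖D₂‖² D₁ v`, this gives
`‖D₁ D₂ w‖ = ‖D₁‖ ‖D₂‖ ‖w‖`, so `w` attains the submultiplicative bound `‖D₁ D₂‖ ≤ ‖D₁‖ ‖D₂‖`
(and `w ≠ 0` unless `D₂ = 0`).
-/

open Matrix BigOperators

/-- The ℓ²-operator norm of a real `m×n` matrix, i.e. the operator norm of the induced linear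
map from `ℝⁿ` to `ℝᵐ`, both equipped with the Euclidean norm. -/
noncomputable def l2OpNorm {m n : ℕ} (D : Matrix (Fin m) (Fin n) ℝ) : ℝ :=
  ‖LinearMap.toContinuousLinearMap (Matrix.toEuclideanLin D)‖

open scoped Matrix.Norms.L2Operator

lemma l2OpNorm_eq_norm {m n : ℕ} (D : Matrix (Fin m) (Fin n) ℝ) : l2OpNorm D = ‖D‖ := rfl

namespace Matrix

variable {m n : Type*} [Fintype m] [Fintype n]

lemma norm_toLp_sq_eq_dotProduct (x : n → ℝ) : ‖WithLp.toLp 2 x‖ ^ 2 = x ⬝ᵥ x := by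
  rw [← real_inner_self_eq_norm_sq, EuclideanSpace.inner_toLp_toLp, star_trivial]

lemma norm_toLp_mulVec_of_transpose_mul_self_mulVec (D : Matrix m n ℝ) {x : n → ℝ} {c : ℝ}
    (hc : 0 ≤ c) (h : (Dᵀ * D) *ᵥ x = c ^ 2 • x) :
    ‖WithLp.toLp 2 (D *ᵥ x)‖ = c * ‖WithLp.toLp 2 x‖ := by
  refine (pow_left_inj₀ (norm_nonneg _) (by positivity) two_ne_zero).mp ?_
  rw [mul_pow, norm_toLp_sq_eq_dotProduct, norm_toLp_sq_eq_dotProduct, dotProduct_mulVec,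
    vecMul_mulVec, ← mulVec_transpose, transpose_mul, transpose_transpose, h, smul_dotProduct,
    smul_eq_mul]

lemma le_l2_opNorm_of_norm_toLp_mulVec_eq [DecidableEq n] (A : Matrix m n ℝ) {x : n → ℝ} {c : ℝ}
    (hx : x ≠ 0) (h : ‖WithLp.toLp 2 (A *ᵥ x)‖ = c * ‖WithLp.toLp 2 x‖) : c ≤ ‖A‖ := by
  have hpos : 0 < ‖WithLp.toLp 2 x‖ := by simpa using hx
  exact le_of_mul_le_mul_right (h ▸ A.l2_opNorm_mulVec (WithLp.toLp 2 x)) hpos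

end Matrix

/-- Sufficient condition for multiplicativity of the minimal index: if `D₁ᵗD₁` and `D₂D₂ᵗ`
admit a common (nonzero) Perron–Frobenius eigenvector, then `‖D₁·D₂‖ = ‖D₁‖·‖D₂‖`. -/
theorem l2OpNorm_mul_of_common_PF_eigenvector {p n q : ℕ}
    (D₁ : Matrix (Fin p) (Fin n) ℝ) (D₂ : Matrix (Fin n) (Fin q) ℝ)
    (v : Fin n → ℝ) (hv : v ≠ 0)
    (h1 : (D₁ᵀ * D₁).mulVec v = l2OpNorm D₁ ^ 2 • v)
    (h2 : (D₂ * D₂ᵀ).mulVec v = l2OpNorm D₂ ^ 2 • v) :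
    l2OpNorm (D₁ * D₂) = l2OpNorm D₁ * l2OpNorm D₂ := by
  simp only [l2OpNorm_eq_norm] at h1 h2 ⊢
  refine le_antisymm (l2_opNorm_mul D₁ D₂) ?_
  have hD₁v : ‖WithLp.toLp 2 (D₁ *ᵥ v)‖ = ‖D₁‖ * ‖WithLp.toLp 2 v‖ :=
    norm_toLp_mulVec_of_transpose_mul_self_mulVec D₁ (norm_nonneg _) h1
  have hD₂tv : ‖WithLp.toLp 2 (D₂ᵀ *ᵥ v)‖ = ‖D₂‖ * ‖WithLp.toLp 2 v‖ :=
    norm_toLp_mulVec_of_transpose_mul_self_mulVec D₂ᵀ (norm_nonneg _) (by rwa [transpose_transpose])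
  rcases (norm_nonneg D₂).eq_or_lt with hD₂ | hD₂
  · simp [← hD₂]
  have hD₂tv₀ : D₂ᵀ *ᵥ v ≠ 0 := by
    intro h0
    rw [h0, WithLp.toLp_zero, norm_zero] at hD₂tv
    exact (mul_pos hD₂ (by simpa using hv)).ne hD₂tv
  refine le_l2_opNorm_of_norm_toLp_mulVec_eq (D₁ * D₂) hD₂tv₀ ?_
  calc ‖WithLp.toLp 2 ((D₁ * D₂) *ᵥ (D₂ᵀ *ᵥ v))‖ = ‖WithLp.toLp 2 (‖D₂‖ ^ 2 • D₁ *ᵥ v)‖ := by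
        rw [mulVec_mulVec, Matrix.mul_assoc, ← mulVec_mulVec, h2, mulVec_smul]
    _ = ‖D₂‖ ^ 2 * (‖D₁‖ * ‖WithLp.toLp 2 v‖) := by
        rw [WithLp.toLp_smul, norm_smul, hD₁v, Real.norm_of_nonneg (by positivity)]
    _ = ‖D₁‖ * ‖D₂‖ * ‖WithLp.toLp 2 (D₂ᵀ *ᵥ v)‖ := by rw [hD₂tv]; ring
end
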